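/- Let D be a dialgebra satisfying the 0-identities, let D̄ = D/D₀ with induced single operation, and let D̂ = D̄ ⊕ D be the split null extension (with D·D = 0, (ā)·b = a⊢b, b·(ā) = b⊣a). Then the map D → k[T] ⊗ D̂ given by a ↦ 1⊗(a+D₀) + T⊗a is an injective homomorphism of dialgebras from D to (Cur D̂)^(0), where on Cur D̂ the dialgebra operations are x⊢y = (x_λ y)|_{λ=0} and x⊣y = (x_λ y)|_{λ=−T}. -/
import Mathlib


/-- λ-product of the current conformal algebra `Cur A = k[T] ⊗ A` in the
coefficient encoding (`Cur A = ℕ →₀ A`, index = power of `T`; outer index of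
the result = power of λ):
`(T^m ⊗ a)_λ (T^n ⊗ b) = (−λ)^m (T+λ)^n ⊗ (a·b)`. -/
noncomputable def curProd (k : Type*) {A : Type*} [Field k] [AddCommGroup A]
    [Module k A] (mul : A → A → A) (y z : ℕ →₀ A) : ℕ →₀ (ℕ →₀ A) :=
  y.sum fun m a => z.sum fun n b =>
    (Finset.range (n + 1)).sum fun i =>
      Finsupp.single (m + i)
        (Finsupp.single (n - i) (((-1 : k) ^ m * (n.choose i : k)) • mul a b))

section dialgebra

variable {k D : Type*} [Field k] [AddCommGroup D] [Module k D]
variable (l r : D →ₗ[k] D →ₗ[k] D)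

/-- `D₀`: the span of all elements `a ⊢ b − a ⊣ b`
(`l a b = a ⊢ b`, `r a b = a ⊣ b`). -/
def DZero : Submodule k D :=
  Submodule.span k {z : D | ∃ a b : D, z = l a b - r a b}


/-- The well-defined left action of `D̄ = D/D₀` on `D`: `(ā) ⊳ b = a ⊢ b`. -/
noncomputable def actL (h02 : ∀ x y z : D, l (r x y) z = l (l x y) z) : (D ⧸ DZero l r) →ₗ[k] D →ₗ[k] D :=
  Submodule.liftQ _ l (by
    rw [DZero, Submodule.span_le]
    rintro _ ⟨a, b, rfl⟩
    simp only [SetLike.mem_coe, LinearMap.mem_ker]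
    ext c
    simp only [map_sub, LinearMap.sub_apply, LinearMap.zero_apply]
    rw [h02]
    exact sub_self _)

/-- The well-defined right action of `D̄ = D/D₀` on `D`: `a ⊲ (ȳ) = a ⊣ y`
(as a linear map in the quotient variable first). -/
noncomputable def actR (h01 : ∀ x y z : D, r x (l y z) = r x (r y z)) : (D ⧸ DZero l r) →ₗ[k] D →ₗ[k] D :=
  Submodule.liftQ _ r.flip (by
    rw [DZero, Submodule.span_le]
    rintro _ ⟨a, b, rfl⟩
    simp only [SetLike.mem_coe, LinearMap.mem_ker]
    ext c
    simp only [map_sub, LinearMap.sub_apply, LinearMap.zero_apply,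
      LinearMap.flip_apply]
    rw [h01]
    exact sub_self _)

/-- The well-defined multiplication on `D̄ = D/D₀`: `x̄ · ȳ = (x ⊢ y)‾`. -/
noncomputable def mulQbar (h01 : ∀ x y z : D, r x (l y z) = r x (r y z))
    (h02 : ∀ x y z : D, l (r x y) z = l (l x y) z) : (D ⧸ DZero l r) →ₗ[k] (D ⧸ DZero l r) →ₗ[k] (D ⧸ DZero l r) :=
  (Submodule.liftQ _
    (Submodule.liftQ (DZero l r) (l.compr₂ (DZero l r).mkQ) (by
        rw [DZero, Submodule.span_le]
        rintro _ ⟨a, b, rfl⟩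
        simp only [SetLike.mem_coe, LinearMap.mem_ker]
        ext c
        simp only [LinearMap.compr₂_apply, map_sub, LinearMap.sub_apply,
          LinearMap.zero_apply]
        rw [h02]
        simp)).flip (by
      apply Submodule.span_le.mpr
      rintro _ ⟨a, b, rfl⟩
      simp only [SetLike.mem_coe, LinearMap.mem_ker]
      apply LinearMap.ext
      intro q
      obtain ⟨x, rfl⟩ := Submodule.Quotient.mk_surjective _ q
      have m1 : l x (l a b) - r x (l a b) ∈ DZero l r :=
        Submodule.subset_span ⟨x, l a b, rfl⟩
      have m2 : l x (r a b) - r x (r a b) ∈ DZero l r :=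
        Submodule.subset_span ⟨x, r a b, rfl⟩
      have key : l x (l a b - r a b) =
          (l x (l a b) - r x (l a b)) - (l x (r a b) - r x (r a b)) := by
        rw [h01 x a b]
        simp only [map_sub]
        abel
      rw [LinearMap.flip_apply, LinearMap.zero_apply, Submodule.liftQ_apply,
        LinearMap.compr₂_apply, key, Submodule.mkQ_apply,
        Submodule.Quotient.mk_eq_zero]
      exact sub_mem m1 m2)).flip

/-- The split null extension `D̂ = D̄ ⊕ D` with `D·D = 0`,
`(x̄, a)·(ȳ, b) = (x̄ȳ, x ⊢ b + a ⊣ y)`. -/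
noncomputable def hatMul (h01 : ∀ x y z : D, r x (l y z) = r x (r y z))
    (h02 : ∀ x y z : D, l (r x y) z = l (l x y) z) :
    ((D ⧸ DZero l r) × D) →ₗ[k] ((D ⧸ DZero l r) × D) →ₗ[k] ((D ⧸ DZero l r) × D) :=
  LinearMap.mk₂ k
    (fun p q => (mulQbar l r h01 h02 p.1 q.1,
      actL l r h02 p.1 q.2 + actR l r h01 q.1 p.2))
    (by
      intro p p' q
      simp only [Prod.fst_add, Prod.snd_add, map_add, LinearMap.add_apply,
        Prod.mk_add_mk]
      refine Prod.ext rfl ?_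
      abel)
    (by
      intro c p q
      simp only [Prod.smul_fst, Prod.smul_snd, map_smul, LinearMap.smul_apply,
        Prod.smul_mk]
      refine Prod.ext rfl ?_
      module)
    (by
      intro p q q'
      simp only [Prod.fst_add, Prod.snd_add, map_add, LinearMap.add_apply,
        Prod.mk_add_mk]
      refine Prod.ext rfl ?_
      abel)
    (by
      intro c p q
      simp only [Prod.smul_fst, Prod.smul_snd, map_smul, LinearMap.smul_apply,
        Prod.smul_mk]
      refine Prod.ext rfl ?_
      module)

/-- The embedding `a ↦ 1 ⊗ (a + D₀) + T ⊗ a` of `D` into `Cur D̂`. -/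
noncomputable def iotaHat (a : D) : ℕ →₀ ((D ⧸ DZero l r) × D) :=
  Finsupp.single 0 ((DZero l r).mkQ a, 0) + Finsupp.single 1 (0, a)


lemma curProd_single_single {K A : Type*} [Field K] [AddCommGroup A] [Module K A]
    (M : A →ₗ[K] A →ₗ[K] A) (m n : ℕ) (a b : A) :
    curProd K (fun a b => M a b) (Finsupp.single m a) (Finsupp.single n b) =
      (Finset.range (n + 1)).sum fun i =>
        Finsupp.single (m + i) (Finsupp.single (n - i)
          (((-1 : K) ^ m * (n.choose i : K)) • M a b)) := by
  unfold curProd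
  rw [Finsupp.sum_single_index, Finsupp.sum_single_index]
  · simp
  · simp [Finsupp.sum]

lemma curProd_add_left {K A : Type*} [Field K] [AddCommGroup A] [Module K A]
    (M : A →ₗ[K] A →ₗ[K] A) (y y' z : ℕ →₀ A) :
    curProd K (fun a b => M a b) (y + y') z =
      curProd K (fun a b => M a b) y z + curProd K (fun a b => M a b) y' z := by
  unfold curProd
  rw [Finsupp.sum_add_index']
  · intro m; simp [Finsupp.sum]
  · intro m a a'
    rw [← Finsupp.sum_add]
    congr 1; ext n b
    simp [map_add, smul_add, Finsupp.single_add, Finset.sum_add_distrib]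

lemma curProd_add_right {K A : Type*} [Field K] [AddCommGroup A] [Module K A]
    (M : A →ₗ[K] A →ₗ[K] A) (y z z' : ℕ →₀ A) :
    curProd K (fun a b => M a b) y (z + z') =
      curProd K (fun a b => M a b) y z + curProd K (fun a b => M a b) y z' := by
  unfold curProd
  rw [← Finsupp.sum_add]
  congr 1; ext m a
  rw [Finsupp.sum_add_index']
  · intro n; simp
  · intro n b b'; simp [map_add, smul_add, Finsupp.single_add, Finset.sum_add_distrib]

section keycomp
variable (h01 : ∀ x y z : D, r x (l y z) = r x (r y z))
variable (h02 : ∀ x y z : D, l (r x y) z = l (l x y) z)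

lemma mulQbar_mk (x y : D) :
    mulQbar l r h01 h02 ((DZero l r).mkQ x) ((DZero l r).mkQ y) = (DZero l r).mkQ (l x y) := rfl

lemma actL_mk (x b : D) : actL l r h02 ((DZero l r).mkQ x) b = l x b := rfl

lemma actR_mk (y a : D) : actR l r h01 ((DZero l r).mkQ y) a = r a y := rfl

lemma hatMul_apply' (p q : (D ⧸ DZero l r) × D) :
    hatMul l r h01 h02 p q =
      (mulQbar l r h01 h02 p.1 q.1, actL l r h02 p.1 q.2 + actR l r h01 q.1 p.2) := rfl

lemma curProd_iota (a b : D) :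
    curProd k (fun p q => hatMul l r h01 h02 p q) (iotaHat l r a) (iotaHat l r b) =
      Finsupp.single 0 (iotaHat l r (l a b)) +
        Finsupp.single 1 (Finsupp.single 0 ((0 : D ⧸ DZero l r), l a b - r a b)) := by
  unfold iotaHat
  rw [curProd_add_left (hatMul l r h01 h02), curProd_add_right (hatMul l r h01 h02),
    curProd_add_right (hatMul l r h01 h02)]
  rw [curProd_single_single, curProd_single_single, curProd_single_single,
    curProd_single_single]
  simp only [Finset.sum_range_succ, Finset.sum_range_zero, zero_add,
    hatMul_apply', mulQbar_mk, actL_mk, actR_mk, map_zero, LinearMap.zero_apply,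
    add_zero, pow_zero, pow_one, Nat.choose_self, Nat.choose_zero_right,
    Nat.cast_one, one_mul, mul_one, one_smul, neg_smul, neg_one_mul,
    Finsupp.single_neg, Prod.mk.injEq, Prod.neg_mk, neg_zero]
  have h : ((0 : D ⧸ DZero l r), l a b - r a b) =
      ((0 : D ⧸ DZero l r), l a b) - ((0 : D ⧸ DZero l r), r a b) := by
    simp [Prod.mk_sub_mk]
  simp only [h, Finsupp.single_sub, Finsupp.single_add, Nat.sub_self, Nat.sub_zero,
    Prod.mk_zero_zero, Finsupp.single_zero, neg_zero, add_zero]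
  abel

end keycomp
/-- Theorem on embedding of dialgebras into current conformal
algebras: for a dialgebra `D` satisfying the 0-identities, the map
`a ↦ 1 ⊗ (a + D₀) + T ⊗ a` is an injective homomorphism of dialgebras
`D → (Cur D̂)⁽⁰⁾`, where `D̂ = D̄ ⊕ D` is the split null extension and the
dialgebra operations on `Cur D̂` are `x ⊢ y = (x_λ y)|_{λ=0}` and
`x ⊣ y = (x_λ y)|_{λ=−T}` (`T` acting on `Cur D̂ = ℕ →₀ D̂` as the index
shift). -/
theorem stmt11 {k D : Type*} [Field k] [AddCommGroup D] [Module k D]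
    (l r : D →ₗ[k] D →ₗ[k] D)
    (h01 : ∀ x y z : D, r x (l y z) = r x (r y z))
    (h02 : ∀ x y z : D, l (r x y) z = l (l x y) z) :
    Function.Injective (iotaHat l r) ∧
    (∀ a b : D,
      iotaHat l r (l a b) =
        (curProd k (fun p q => hatMul l r h01 h02 p q)
          (iotaHat l r a) (iotaHat l r b)) 0) ∧
    (∀ a b : D,
      iotaHat l r (r a b) =
        (curProd k (fun p q => hatMul l r h01 h02 p q)
            (iotaHat l r a) (iotaHat l r b)).sum fun n x =>
          ((-1 : k) ^ n) •
            ((Finsupp.lmapDomain ((D ⧸ DZero l r) × D) k (· + 1)) ^ n) x) := by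
  refine ⟨?_, ?_, ?_⟩
  · intro a b hab
    have h1 := congrArg (fun f => (f 1).2) hab
    simpa [iotaHat, Finsupp.single_apply] using h1
  · intro a b
    rw [curProd_iota]
    simp
  · intro a b
    rw [curProd_iota]
    rw [Finsupp.sum_add_index' (fun n => by simp) (fun n x y => by simp [smul_add])]
    rw [Finsupp.sum_single_index (by simp), Finsupp.sum_single_index (by simp)]
    simp only [pow_zero, pow_one, one_smul, Module.End.one_apply, neg_smul,
      Finsupp.lmapDomain_apply, Finsupp.mapDomain_single]
    have hmk : (DZero l r).mkQ (l a b) = (DZero l r).mkQ (r a b) := by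
      rw [Submodule.mkQ_apply, Submodule.mkQ_apply, Submodule.Quotient.eq]
      exact Submodule.subset_span ⟨a, b, rfl⟩
    have h2 : ((0 : D ⧸ DZero l r), l a b - r a b) =
        ((0 : D ⧸ DZero l r), l a b) - ((0 : D ⧸ DZero l r), r a b) := by
      simp [Prod.mk_sub_mk]
    simp only [iotaHat, hmk, h2, Finsupp.single_sub, zero_add]
    abel
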